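/- arXiv:math/0012177 — 3 statements merged into one kernel-verified Lean document; each statement's English description precedes it below -/
import Mathlib

section
/- Let H₁, …, H_k be hyperplanes and F₁, …, F_k facets of a convex polytope P in ℝ³ such that F_i ∩ H_j = ∅ whenever i ≠ j, and H_j ∩ F_j ≠ ∅ for each j. Then for i ≠ j, the set of points beyond F_i (points violating the facet inequality of F_i but satisfying all other facet inequalities of P) is disjoint from H_j. -/
private lemma combo_sum (n y x : Fin 3 → ℝ) (t : ℝ) :
    ∑ r, n r * ((1 - t) * y r + t * x r)
      = (1 - t) * ∑ r, n r * y r + t * ∑ r, n r * x r := by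
  rw [Finset.mul_sum, Finset.mul_sum, ← Finset.sum_add_distrib]
  exact Finset.sum_congr rfl (fun r _ => by ring)

/-- Let `P` be a convex polytope in ℝ³ given by facet inequalities, and
`H₁, …, H_k` hyperplanes with `F (σ i) ∩ H j = ∅` for `i ≠ j` and `H j ∩ F (σ j) ≠ ∅`.
Then for `i ≠ j` the set of points beyond the facet `F (σ i)` is disjoint from `H j`. -/
theorem stmt13 {ι : Type*} [Fintype ι] (n : ι → Fin 3 → ℝ) (c : ι → ℝ)
    (P : Set (Fin 3 → ℝ)) (hP : P = {x | ∀ i, ∑ j, n i j * x j ≤ c i})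
    (k : ℕ) (m : Fin k → Fin 3 → ℝ) (e : Fin k → ℝ)
    (H : Fin k → Set (Fin 3 → ℝ)) (hH : ∀ j, H j = {x | ∑ r, m j r * x r = e j})
    (σ : Fin k → ι)
    (F : ι → Set (Fin 3 → ℝ)) (hFdef : ∀ i, F i = {x ∈ P | ∑ j, n i j * x j = c i})
    (beyond : ι → Set (Fin 3 → ℝ))
    (hbey : ∀ i, beyond i =
      {x | c i < ∑ j, n i j * x j ∧ ∀ i', i' ≠ i → ∑ j, n i' j * x j < c i'})
    (hdisj : ∀ i j : Fin k, i ≠ j → F (σ i) ∩ H j = ∅)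
    (hmeet : ∀ j : Fin k, (H j ∩ F (σ j)).Nonempty) :
    ∀ i j : Fin k, i ≠ j → beyond (σ i) ∩ H j = ∅ := by
  intro i j hij
  by_contra hne
  obtain ⟨x, hxb, hxH⟩ := Set.nonempty_iff_ne_empty.2 hne
  obtain ⟨y, hyH, hyF⟩ := hmeet j
  rw [hbey] at hxb
  obtain ⟨hxgt, hxlt⟩ := hxb
  rw [hFdef] at hyF
  obtain ⟨hyP, _⟩ := hyF
  rw [hP] at hyP
  rw [hH] at hxH hyH
  -- set up the segment point
  set a := ∑ r, n (σ i) r * y r with ha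
  set b := ∑ r, n (σ i) r * x r with hb
  have hac : a ≤ c (σ i) := hyP (σ i)
  have hbc : c (σ i) < b := hxgt
  have hab : 0 < b - a := by linarith
  set t : ℝ := (c (σ i) - a) / (b - a) with ht
  have ht0 : 0 ≤ t := div_nonneg (by linarith) hab.le
  have ht1 : t ≤ 1 := by
    rw [ht, div_le_one hab]; linarith
  have htb : (1 - t) * a + t * b = c (σ i) := by
    have : t * (b - a) = c (σ i) - a := div_mul_cancel₀ _ hab.ne'
    nlinarith [this]
  set z : Fin 3 → ℝ := fun r => (1 - t) * y r + t * x r with hz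
  have hzeq : ∑ r, n (σ i) r * z r = c (σ i) := by
    rw [hz, combo_sum]; exact htb
  have hzP : ∀ i', ∑ r, n i' r * z r ≤ c i' := by
    intro i'
    by_cases h : i' = σ i
    · subst h; exact hzeq.le
    · rw [hz, combo_sum]
      have h1 : ∑ r, n i' r * y r ≤ c i' := hyP i'
      have h2 : ∑ r, n i' r * x r < c i' := hxlt i' h
      nlinarith
  have hzF : z ∈ F (σ i) := by
    rw [hFdef, hP]; exact ⟨hzP, hzeq⟩
  have hzH : z ∈ H j := by
    rw [hH]
    show ∑ r, m j r * z r = e j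
    rw [hz, combo_sum, hxH, hyH]; ring
  have := hdisj i j hij
  exact absurd (Set.mem_inter hzF hzH) (by rw [this]; exact Set.notMem_empty z)
end

section
/- Every triangulation of a convex d-polytope with n vertices (using only polytope vertices) has at least n - d full-dimensional simplices. -/
/-!
Any two simplices of the triangulation are linked by a chain of simplices in which consecutive
ones share a facet, i.e. `d` vertices: a generic segment between interior points of the two
simplices misses every face of dimension `< d - 1`, so it can only pass from one simplex to the
next through a common facet. Every vertex of the polytope, being extreme, is a vertex of some
simplex. Growing the triangulation from one simplex along such chains, each new simplex brings at
most one new vertex, so `n ≤ (d + 1) + (#T - 1)`.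
-/

open Finset Module

section Geometry

variable {E : Type*} [NormedAddCommGroup E] [NormedSpace ℝ E]

theorem affineSpan_ne_top_of_card_le_finrank [FiniteDimensional ℝ E] (s : Finset E)
    (h : #s ≤ finrank ℝ E) : affineSpan ℝ (s : Set E) ≠ ⊤ := by
  classical
  intro htop
  rcases s.eq_empty_or_nonempty with rfl | hne
  · simp at htop
  · have hle := finrank_vectorSpan_image_finset_le ℝ id s
      (Nat.sub_one_add_one (Finset.card_pos.2 hne).ne').symm
    rw [Finset.image_id, ← direction_affineSpan, htop, AffineSubspace.direction_top,
      finrank_top] at hle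
    have := Finset.card_pos.2 hne
    omega

theorem AffineSubspace.interior_eq_empty_of_ne_top {A : AffineSubspace ℝ E} (hA : A ≠ ⊤) :
    interior (A : Set E) = ∅ := by
  by_contra h
  refine hA (top_unique ?_)
  rw [← isOpen_interior.affineSpan_eq_top (Set.nonempty_iff_ne_empty.2 h)]
  exact affineSpan_le.2 interior_subset

theorem IsOpen.exists_mem_forall_notMem_affineSubspace [FiniteDimensional ℝ E] {U : Set E}
    (hU : IsOpen U) (hne : U.Nonempty) {ι : Type*} {S : Set ι} (hS : S.Countable)
    (A : ι → AffineSubspace ℝ E) (hA : ∀ i ∈ S, A i ≠ ⊤) : ∃ x ∈ U, ∀ i ∈ S, x ∉ A i := by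
  have hdense : Dense (⋂ i ∈ S, ((A i : Set E))ᶜ) :=
    dense_biInter_of_isOpen (fun i _ => (A i).closed_of_finiteDimensional.isOpen_compl) hS
      fun i hi => interior_eq_empty_iff_dense_compl.1
        (AffineSubspace.interior_eq_empty_of_ne_top (hA i hi))
  obtain ⟨x, hxU, hx⟩ := hdense.inter_open_nonempty U hU hne
  exact ⟨x, hxU, Set.mem_iInter₂.1 hx⟩

theorem lineMap_notMem_affineSpan {x y : E} {s : Set E} (hx : x ∉ affineSpan ℝ s)
    (hy : y ∉ affineSpan ℝ (insert x s)) (c : ℝ) : AffineMap.lineMap x y c ∉ affineSpan ℝ s := by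
  intro hz
  rcases eq_or_ne c 0 with rfl | hc
  · exact hx (by simpa using hz)
  · refine hy ?_
    have hy' : AffineMap.lineMap x (AffineMap.lineMap x y c) c⁻¹ = y := by
      simp [inv_mul_cancel₀ hc]
    rw [← hy']
    exact AffineMap.lineMap_mem _ (mem_affineSpan ℝ (Set.mem_insert x s))
      (affineSpan_mono ℝ (Set.subset_insert x s) hz)

theorem exists_segment_notMem_affineSpan [FiniteDimensional ℝ E] {U U' : Set E}
    (hU : IsOpen U) (hUne : U.Nonempty) (hU' : IsOpen U') (hU'ne : U'.Nonempty) (V : Finset E) :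
    ∃ x ∈ U, ∃ y ∈ U', ∀ F ⊆ V, #F < finrank ℝ E →
      ∀ z ∈ segment ℝ x y, z ∉ affineSpan ℝ (F : Set E) := by
  classical
  have hS : {F : Finset E | F ⊆ V ∧ #F < finrank ℝ E}.Countable :=
    ((V.powerset : Set (Finset E)).toFinite.subset fun F hF => Finset.mem_powerset.2 hF.1).countable
  obtain ⟨x, hxU, hx⟩ := hU.exists_mem_forall_notMem_affineSubspace hUne hS
    (fun F => affineSpan ℝ (F : Set E))
    fun F hF => affineSpan_ne_top_of_card_le_finrank F hF.2.le
  obtain ⟨y, hyU', hy⟩ := hU'.exists_mem_forall_notMem_affineSubspace hU'ne hS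
    (fun F => affineSpan ℝ ((insert x F : Finset E) : Set E))
    fun F hF => affineSpan_ne_top_of_card_le_finrank _ ((Finset.card_insert_le x F).trans hF.2)
  refine ⟨x, hxU, y, hyU', fun F hFV hF z hz => ?_⟩
  rw [segment_eq_image_lineMap] at hz
  obtain ⟨c, -, rfl⟩ := hz
  exact lineMap_notMem_affineSpan (hx F ⟨hFV, hF⟩) (by simpa using hy F ⟨hFV, hF⟩) c

end Geometry

theorem Relation.ReflTransGen.exists_mem_notMem {X : Type*} {r : X → X → Prop} {S : Set X}
    {a b : X} (h : Relation.ReflTransGen r a b) (ha : a ∈ S) (hb : b ∉ S) :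
    ∃ u ∈ S, ∃ w ∉ S, r u w := by
  induction h with
  | refl => exact absurd ha hb
  | @tail c b _ hcb ih =>
    by_cases hc : c ∈ S
    · exact ⟨c, hc, b, hb, hcb⟩
    · exact ih hc

theorem IsPreconnected.reflTransGen_of_subset_biUnion {X ι : Type*} [TopologicalSpace X]
    {K : Set X} (hK : IsPreconnected K) {T : Finset ι} {C : ι → Set X}
    (hC : ∀ i ∈ T, IsClosed (C i)) (hcover : K ⊆ ⋃ i ∈ T, C i) {r : ι → ι → Prop}
    (hr : ∀ i ∈ T, ∀ j ∈ T, (K ∩ (C i ∩ C j)).Nonempty → r i j) {i j : ι} (hi : i ∈ T)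
    (hj : j ∈ T) (hKi : (K ∩ C i).Nonempty) (hKj : (K ∩ C j).Nonempty) :
    Relation.ReflTransGen r i j := by
  classical
  by_contra hij
  set R := T.filter (Relation.ReflTransGen r i)
  set N := T.filter fun k => ¬Relation.ReflTransGen r i k
  have hcover' : K ⊆ (⋃ k ∈ R, C k) ∪ ⋃ k ∈ N, C k := by
    intro z hz
    obtain ⟨k, hk, hzk⟩ := Set.mem_iUnion₂.1 (hcover hz)
    by_cases hik : Relation.ReflTransGen r i k
    · exact Or.inl (Set.mem_biUnion (Finset.mem_filter.2 ⟨hk, hik⟩) hzk)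
    · exact Or.inr (Set.mem_biUnion (Finset.mem_filter.2 ⟨hk, hik⟩) hzk)
  have hKR : (K ∩ ⋃ k ∈ R, C k).Nonempty := hKi.mono fun z hz =>
    ⟨hz.1, Set.mem_biUnion (Finset.mem_filter.2 ⟨hi, .refl⟩) hz.2⟩
  have hKN : (K ∩ ⋃ k ∈ N, C k).Nonempty := hKj.mono fun z hz =>
    ⟨hz.1, Set.mem_biUnion (Finset.mem_filter.2 ⟨hj, hij⟩) hz.2⟩
  obtain ⟨z, hzK, hzR, hzN⟩ := isPreconnected_closed_iff.1 hK _ _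
    (isClosed_biUnion_finset fun k hk => hC k (Finset.mem_filter.1 hk).1)
    (isClosed_biUnion_finset fun k hk => hC k (Finset.mem_filter.1 hk).1) hcover' hKR hKN
  obtain ⟨k, hk, hzk⟩ := Set.mem_iUnion₂.1 hzR
  obtain ⟨l, hl, hzl⟩ := Set.mem_iUnion₂.1 hzN
  rw [Finset.mem_filter] at hk hl
  exact hl.2 (hk.2.tail (hr k hk.1 l hl.1 ⟨z, hzK, hzk, hzl⟩))

section Counting

variable {X : Type*} [DecidableEq X] {d : ℕ} {T : Finset (Finset X)}

theorem card_biUnion_insert_le {S : Finset (Finset X)} {u w : Finset X} (hu : u ∈ S)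
    (hw : #w = d + 1) (huw : d ≤ #(u ∩ w)) :
    #((insert w S).biUnion id) ≤ #(S.biUnion id) + 1 := by
  have hwu : #(w \ u) ≤ 1 := by
    have := Finset.card_sdiff_add_card_inter w u
    rw [Finset.inter_comm] at this
    omega
  have hsub : w \ S.biUnion id ⊆ w \ u :=
    Finset.sdiff_subset_sdiff subset_rfl (Finset.subset_biUnion_of_mem id hu)
  calc #((insert w S).biUnion id) = #(w \ S.biUnion id) + #(S.biUnion id) := by
        rw [Finset.biUnion_insert, id, Finset.card_sdiff_add_card]
    _ ≤ #(S.biUnion id) + 1 := by linarith [Finset.card_le_card hsub]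

theorem card_biUnion_le_card_add (hcard : ∀ s ∈ T, #s = d + 1)
    (hconn : ∀ s ∈ T, ∀ t ∈ T, Relation.ReflTransGen (fun u w => w ∈ T ∧ d ≤ #(u ∩ w)) s t) :
    #(T.biUnion id) ≤ #T + d := by
  rcases T.eq_empty_or_nonempty with rfl | ⟨s₀, hs₀⟩
  · simp
  suffices H : ∀ n, ∀ S ⊆ T, s₀ ∈ S → #T - #S = n → #(T.biUnion id) + #S ≤ #(S.biUnion id) + #T by
    have := H _ {s₀} (Finset.singleton_subset_iff.2 hs₀) (Finset.mem_singleton_self _) rfl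
    rw [Finset.singleton_biUnion, id, hcard s₀ hs₀, Finset.card_singleton] at this
    omega
  intro n
  induction n with
  | zero =>
    intro S hST _ hn
    rw [Finset.eq_of_subset_of_card_le hST (by omega)]
  | succ n ih =>
    intro S hST hs₀S hn
    obtain ⟨t, htT, htS⟩ := Finset.exists_of_ssubset
      (Finset.ssubset_iff_subset_ne.2 ⟨hST, by rintro rfl; omega⟩)
    obtain ⟨u, huS, w, hwS, hwT, huw⟩ :=
      (hconn s₀ hs₀ t htT).exists_mem_notMem (S := (S : Set (Finset X))) hs₀S htS
    have hins := ih (insert w S) (Finset.insert_subset hwT hST) (Finset.mem_insert_of_mem hs₀S)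
    rw [Finset.card_insert_of_notMem hwS] at hins
    have := hins (by omega)
    have := card_biUnion_insert_le huS (hcard w hwT) huw
    omega

end Counting

section Triangulation

variable {E : Type*} [NormedAddCommGroup E] [NormedSpace ℝ E] [FiniteDimensional ℝ E]

theorem reflTransGen_finrank_le_card_inter [DecidableEq E] (V : Finset E) (T : Finset (Finset E))
    (hsub : ∀ s ∈ T, s ⊆ V) (hspan : ∀ s ∈ T, affineSpan ℝ (s : Set E) = ⊤)
    (hcover : convexHull ℝ (V : Set E) ⊆ ⋃ s ∈ T, convexHull ℝ (s : Set E))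
    (hmeet : ∀ s ∈ T, ∀ t ∈ T, convexHull ℝ (s : Set E) ∩ convexHull ℝ (t : Set E) =
      convexHull ℝ ((s ∩ t : Finset E) : Set E))
    {s t : Finset E} (hs : s ∈ T) (ht : t ∈ T) :
    Relation.ReflTransGen (fun u w => w ∈ T ∧ finrank ℝ E ≤ #(u ∩ w)) s t := by
  have hint : ∀ u ∈ T, (interior (convexHull ℝ (u : Set E))).Nonempty := fun u hu =>
    interior_convexHull_nonempty_iff_affineSpan_eq_top.2 (hspan u hu)
  obtain ⟨x, hx, y, hy, hgen⟩ := exists_segment_notMem_affineSpan isOpen_interior (hint s hs)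
    isOpen_interior (hint t ht) V
  have hxs := interior_subset hx
  have hyt := interior_subset hy
  have hseg : segment ℝ x y ⊆ convexHull ℝ (V : Set E) :=
    (convex_convexHull ℝ _).segment_subset
      (convexHull_mono (Finset.coe_subset.2 (hsub s hs)) hxs)
      (convexHull_mono (Finset.coe_subset.2 (hsub t ht)) hyt)
  refine (convex_segment x y).isPreconnected.reflTransGen_of_subset_biUnion
    (fun u _ => u.finite_toSet.isClosed_convexHull ℝ) (hseg.trans hcover) ?_ hs ht
    ⟨x, left_mem_segment ℝ x y, hxs⟩ ⟨y, right_mem_segment ℝ x y, hyt⟩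
  rintro u hu w hw ⟨z, hz, hzuw⟩
  refine ⟨hw, not_lt.1 fun hlt => hgen (u ∩ w) (Finset.inter_subset_left.trans (hsub u hu)) hlt
    z hz (convexHull_subset_affineSpan _ ?_)⟩
  rwa [← hmeet u hu w hw]

theorem affineSpan_eq_top_of_affineIndependent {s : Finset E}
    (hind : AffineIndependent ℝ (fun x : (s : Set E) => (x : E))) (hs : #s = finrank ℝ E + 1) :
    affineSpan ℝ (s : Set E) = ⊤ := by
  rw [← Subtype.range_coe (s := (s : Set E))]
  exact hind.affineSpan_eq_top_iff_card_eq_finrank_add_one.2 (by simpa using hs)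

end Triangulation

theorem extremePoints_biUnion_convexHull_subset {𝕜 E ι : Type*} [Field 𝕜] [LinearOrder 𝕜]
    [IsStrictOrderedRing 𝕜] [AddCommGroup E] [Module 𝕜 E] (I : Set ι) (S : ι → Set E) :
    (⋃ i ∈ I, convexHull 𝕜 (S i)).extremePoints 𝕜 ⊆ ⋃ i ∈ I, S i := by
  intro v hv
  obtain ⟨i, hi, hvi⟩ := Set.mem_iUnion₂.1 hv.1
  exact Set.mem_iUnion₂.2 ⟨i, hi, extremePoints_convexHull_subset
    (inter_extremePoints_subset_extremePoints_of_subset (Set.subset_biUnion_of_mem hi) ⟨hvi, hv⟩)⟩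

theorem stmt16_general (d : ℕ) (V : Finset (Fin d → ℝ))
    (P : Set (Fin d → ℝ)) (hP : P = convexHull ℝ (V : Set (Fin d → ℝ)))
    (hvert : (V : Set (Fin d → ℝ)) = Set.extremePoints ℝ P)
    (T : Finset (Finset (Fin d → ℝ)))
    (hsub : ∀ s ∈ T, s ⊆ V)
    (hcard : ∀ s ∈ T, s.card = d + 1)
    (hind : ∀ s ∈ T, AffineIndependent ℝ (fun x : (s : Set (Fin d → ℝ)) => (x : Fin d → ℝ)))
    (hcover : ⋃ s ∈ T, convexHull ℝ (s : Set (Fin d → ℝ)) = P)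
    (hmeet : ∀ s ∈ T, ∀ t ∈ T,
      convexHull ℝ (s : Set (Fin d → ℝ)) ∩ convexHull ℝ (t : Set (Fin d → ℝ)) =
        convexHull ℝ ((s ∩ t : Finset (Fin d → ℝ)) : Set (Fin d → ℝ))) :
    V.card - d ≤ T.card := by
  have hspan : ∀ s ∈ T, affineSpan ℝ (s : Set (Fin d → ℝ)) = ⊤ := fun s hs =>
    affineSpan_eq_top_of_affineIndependent (hind s hs) (by simpa using hcard s hs)
  have hconn : ∀ s ∈ T, ∀ t ∈ T, Relation.ReflTransGen (fun u w => w ∈ T ∧ d ≤ #(u ∩ w)) s t := by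
    intro s hs t ht
    simpa using reflTransGen_finrank_le_card_inter V T hsub hspan (by rw [hcover, hP]) hmeet hs ht
  have hVT : V ⊆ T.biUnion id := by
    intro v hv
    have hvext : v ∈ (⋃ s ∈ T, convexHull ℝ (s : Set (Fin d → ℝ))).extremePoints ℝ := by
      rw [hcover, ← hvert]; exact hv
    simpa using extremePoints_biUnion_convexHull_subset _ _ hvext
  have := card_biUnion_le_card_add hcard hconn
  have := Finset.card_le_card hVT
  omega

/-- Every triangulation of a convex `d`-polytope with `n` vertices (using only
the vertices of the polytope) has at least `n - d` full-dimensional simplices. -/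
theorem stmt16 (d : ℕ) (V : Finset (Fin d → ℝ))
    (P : Set (Fin d → ℝ)) (hP : P = convexHull ℝ (V : Set (Fin d → ℝ)))
    (hvert : (V : Set (Fin d → ℝ)) = Set.extremePoints ℝ P)
    (hdim : affineSpan ℝ (V : Set (Fin d → ℝ)) = ⊤)
    (T : Finset (Finset (Fin d → ℝ)))
    (hsub : ∀ s ∈ T, s ⊆ V)
    (hcard : ∀ s ∈ T, s.card = d + 1)
    (hind : ∀ s ∈ T, AffineIndependent ℝ (fun x : (s : Set (Fin d → ℝ)) => (x : Fin d → ℝ)))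
    (hcover : ⋃ s ∈ T, convexHull ℝ (s : Set (Fin d → ℝ)) = P)
    (hmeet : ∀ s ∈ T, ∀ t ∈ T,
      convexHull ℝ (s : Set (Fin d → ℝ)) ∩ convexHull ℝ (t : Set (Fin d → ℝ)) =
        convexHull ℝ ((s ∩ t : Finset (Fin d → ℝ)) : Set (Fin d → ℝ))) :
    V.card - d ≤ T.card :=
  stmt16_general d V P hP hvert T hsub hcard hind hcover hmeet
end

section
/- Let A₁, A₂, A₃, B₁, B₂, B₃ be six points in Schönhardt position and let x be a point beyond the facet (A₁,A₂,A₃) of their convex hull. If x lies strictly inside the triangular visibility cone bounded by the planes B₁B₂A₂, B₂B₃A₃, B₃B₁A₁, then the tetrahedron conv{x, B₁, B₂, B₃} intersects none of the segments (B_i, A_{i+1}) in their relative interiors. -/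
/-!
The diagonal `(Bᵢ, Aᵢ₊₁)` lies in the plane `BᵢBᵢ₊₁Aᵢ₊₁`, and the cone hypothesis puts `x` and
`Bᵢ₊₂` strictly on the same side of that plane. The affine functional of the plane, normalised
to be positive on that side, is nonnegative on the tetrahedron `conv{x, B₁, B₂, B₃}`, so a point
of the tetrahedron on the plane is a convex combination of the vertices on the plane: it lies on
the edge `[Bᵢ, Bᵢ₊₁]`. That edge meets the line `BᵢAᵢ₊₁` only in `Bᵢ`, which is not in the
open diagonal.
-/

/-- Homogenized 4×4 determinant of four points of ℝ³ (columns `(p,1)`). Its sign is the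
orientation of the simplex on the four points. -/
def det4 (w x y z : Fin 3 → ℝ) : ℝ :=
  Matrix.det (Matrix.of
    ![![w 0, x 0, y 0, z 0], ![w 1, x 1, y 1, z 1], ![w 2, x 2, y 2, z 2], ![1, 1, 1, 1]])

/-- The centroid of the six points of a Schönhardt configuration (an interior reference
point). -/
noncomputable def schCentroid (A B : Fin 3 → Fin 3 → ℝ) : Fin 3 → ℝ :=
  (6 : ℝ)⁻¹ • (A 0 + A 1 + A 2 + B 0 + B 1 + B 2)

/-- Six points in Schönhardt position (local convexity at each edge of the eight facets,
reflex exactly at the three diagonals `(Bᵢ, Aᵢ₊₁)`); see STATEMENT 18. -/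
def SchonhardtPosition (A B : Fin 3 → Fin 3 → ℝ) : Prop :=
  (∀ i : Fin 3,
      0 < det4 (A 0) (A 1) (A 2) (B i) * det4 (A 0) (A 1) (A 2) (schCentroid A B)) ∧
  (∀ i : Fin 3,
      0 < det4 (B 0) (B 1) (B 2) (A (i + 1)) * det4 (B 0) (B 1) (B 2) (schCentroid A B)) ∧
  (∀ i : Fin 3,
      0 < det4 (A i) (B i) (A (i + 1)) (B (i + 2)) *
            det4 (A i) (B i) (A (i + 1)) (schCentroid A B)) ∧
  (∀ i : Fin 3,
      det4 (A i) (B i) (A (i + 1)) (B (i + 1)) *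
        det4 (A i) (B i) (A (i + 1)) (schCentroid A B) < 0)

theorem ConcaveOn.mem_convexHull_zeros_of_nonneg {𝕜 E : Type*} [Field 𝕜] [LinearOrder 𝕜]
    [IsStrictOrderedRing 𝕜] [AddCommGroup E] [Module 𝕜 E] {s : Set E} {f : E → 𝕜}
    (hf : ConcaveOn 𝕜 Set.univ f) (hs : ∀ y ∈ s, 0 ≤ f y) {p : E} (hp : p ∈ convexHull 𝕜 s) (hfp : f p = 0) :
    p ∈ convexHull 𝕜 {y ∈ s | f y = 0} := by
  -- `T` is convex: on a segment where the concave `f` is nonnegative, it can only vanish at an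
  -- inner point if it vanishes at both endpoints.
  let T : Set E := {q | 0 ≤ f q ∧ (f q = 0 → q ∈ convexHull 𝕜 {y ∈ s | f y = 0})}
  have hT : Convex 𝕜 T := by
    rintro a ⟨ha, ha'⟩ b ⟨hb, hb'⟩ θ θ' hθ hθ' hθθ'
    have hconc := hf.2 (Set.mem_univ a) (Set.mem_univ b) hθ hθ' hθθ'
    simp only [smul_eq_mul] at hconc
    refine ⟨by linarith [mul_nonneg hθ ha, mul_nonneg hθ' hb], fun h0 => ?_⟩
    have hθa : θ * f a = 0 := by linarith [mul_nonneg hθ ha, mul_nonneg hθ' hb]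
    have hθb : θ' * f b = 0 := by linarith [mul_nonneg hθ ha, mul_nonneg hθ' hb]
    rcases mul_eq_zero.mp hθa with hθ0 | hfa
    · obtain rfl : θ' = 1 := by linarith
      simp only [hθ0, zero_smul, one_smul, zero_add] at h0 ⊢
      exact hb' h0
    rcases mul_eq_zero.mp hθb with hθ0' | hfb
    · obtain rfl : θ = 1 := by linarith
      simp only [hθ0', zero_smul, one_smul, add_zero] at h0 ⊢
      exact ha' h0
    exact convex_convexHull 𝕜 _ (ha' hfa) (hb' hfb) hθ hθ' hθθ'
  have hsT : s ⊆ T := fun y hy =>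
    ⟨hs y hy, fun h0 => subset_convexHull 𝕜 _ ⟨hy, h0⟩⟩
  exact (convexHull_min hsT hT hp).2 hfp

theorem det4_expand (w x y z : Fin 3 → ℝ) : det4 w x y z =
    w 0 * (x 1 * (y 2 - z 2) - y 1 * (x 2 - z 2) + z 1 * (x 2 - y 2))
  - x 0 * (w 1 * (y 2 - z 2) - y 1 * (w 2 - z 2) + z 1 * (w 2 - y 2))
  + y 0 * (w 1 * (x 2 - z 2) - x 1 * (w 2 - z 2) + z 1 * (w 2 - x 2))
  - z 0 * (w 1 * (x 2 - y 2) - x 1 * (w 2 - y 2) + y 1 * (w 2 - x 2)) := by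
  simp [det4, Matrix.det_succ_row_zero, Fin.sum_univ_succ, Fin.succAbove]
  ring

section Det4

variable (P Q R : Fin 3 → ℝ)

theorem det4_smul_add_smul {a b : ℝ} {u v : Fin 3 → ℝ} (hab : a + b = 1) :
    det4 P Q R (a • u + b • v) = a * det4 P Q R u + b * det4 P Q R v := by
  obtain rfl : b = 1 - a := by linarith
  simp only [det4_expand, Pi.add_apply, Pi.smul_apply, smul_eq_mul]
  ring

theorem det4_swap_right (x : Fin 3 → ℝ) : det4 P Q x R = -det4 P Q R x := by
  simp only [det4_expand]; ring

theorem det4_self_left : det4 P Q R P = 0 := by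
  simp only [det4_expand]; ring

theorem det4_self_mid : det4 P Q R Q = 0 := by
  simp only [det4_expand]; ring

theorem det4_self_right : det4 P Q R R = 0 := by
  simp only [det4_expand]; ring

theorem det4_eq_zero_of_mem_segment_of_mem_openSegment {p : Fin 3 → ℝ}
    (hPQ : p ∈ segment ℝ P Q) (hPR : p ∈ openSegment ℝ P R) (x : Fin 3 → ℝ) :
    det4 P Q R x = 0 := by
  obtain ⟨a, b, -, -, hab, rfl⟩ := hPQ
  obtain ⟨s, t, -, ht, hst, hp⟩ := hPR
  have h := congrArg (fun y => det4 P Q y x) hp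
  simp only [det4_swap_right P Q x, det4_smul_add_smul _ _ _ hst,
    det4_smul_add_smul _ _ _ hab, det4_self_left, det4_self_mid] at h
  have hxR : det4 P Q x R = 0 :=
    (mul_eq_zero.mp (by linarith : t * det4 P Q x R = 0)).resolve_left ht.ne'
  rwa [det4_swap_right, neg_eq_zero] at hxR

end Det4

theorem convexHull_inter_openSegment_eq_empty_of_det4_mul_pos {P Q R S x : Fin 3 → ℝ}
    (hc : 0 < det4 P Q R x * det4 P Q R S) :
    convexHull ℝ {x, P, Q, S} ∩ openSegment ℝ P R = ∅ := by
  -- the functional of the plane `PQR`, normalised to be positive on the side of `S`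
  set g : (Fin 3 → ℝ) → ℝ := fun y => det4 P Q R y * det4 P Q R S with hg
  have hS : 0 < g S := mul_self_pos.mpr (right_ne_zero_of_mul hc.ne')
  have hg_concave : ConcaveOn ℝ Set.univ g := by
    refine ⟨convex_univ, fun u _ v _ a b _ _ hab => le_of_eq ?_⟩
    simp only [hg, smul_eq_mul, det4_smul_add_smul _ _ _ hab]
    ring
  refine Set.eq_empty_of_forall_notMem fun p ⟨hp, hPR⟩ => ?_
  have hgp : g p = 0 := by
    obtain ⟨s, t, -, -, hst, rfl⟩ := hPR
    simp [hg, det4_smul_add_smul _ _ _ hst, det4_self_left, det4_self_right]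
  have hzeros : {y ∈ ({x, P, Q, S} : Set _) | g y = 0} ⊆ {P, Q} := by
    rintro y ⟨rfl | rfl | rfl | rfl, hy⟩ <;> simp_all
  have hPQ : p ∈ segment ℝ P Q := by
    rw [← convexHull_pair]
    refine convexHull_mono hzeros (hg_concave.mem_convexHull_zeros_of_nonneg ?_ hp hgp)
    rintro y (rfl | rfl | rfl | rfl) <;> simp [hg, det4_self_left, det4_self_mid] <;> linarith
  rw [det4_eq_zero_of_mem_segment_of_mem_openSegment P Q R hPQ hPR x, zero_mul] at hc
  exact lt_irrefl 0 hc

theorem stmt19_general (A B : Fin 3 → Fin 3 → ℝ)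
    (x : Fin 3 → ℝ)
    (hcone : ∀ i : Fin 3,
      0 < det4 (B i) (B (i + 1)) (A (i + 1)) x *
            det4 (B i) (B (i + 1)) (A (i + 1)) (B (i + 2))) :
    ∀ i : Fin 3,
      convexHull ℝ ({x, B 0, B 1, B 2} : Set (Fin 3 → ℝ)) ∩
        openSegment ℝ (B i) (A (i + 1)) = ∅ := by
  intro i
  have hrot : ({x, B i, B (i + 1), B (i + 2)} : Set (Fin 3 → ℝ)) = {x, B 0, B 1, B 2} := by
    fin_cases i <;> ext <;> simp <;> tauto
  rw [← hrot]
  exact convexHull_inter_openSegment_eq_empty_of_det4_mul_pos (hcone i)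

/-- Let `A, B` be in Schönhardt position and let `x` be a point beyond the
facet `(A₁,A₂,A₃)` of their convex hull (strictly outside the plane of `(A₁,A₂,A₃)` and
strictly on the interior side of every other facet plane).  If `x` lies strictly inside the
visibility cone bounded by the planes `BᵢBᵢ₊₁Aᵢ₊₁` (on the same side as `Bᵢ₊₂` for each),
then the tetrahedron `conv{x, B₁, B₂, B₃}` meets none of the diagonals `(Bᵢ, Aᵢ₊₁)` in their
relative interiors. -/
theorem stmt19 (A B : Fin 3 → Fin 3 → ℝ) (h : SchonhardtPosition A B)
    (x : Fin 3 → ℝ)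
    (hbot : det4 (A 0) (A 1) (A 2) x * det4 (A 0) (A 1) (A 2) (schCentroid A B) < 0)
    (htop : 0 < det4 (B 0) (B 1) (B 2) x * det4 (B 0) (B 1) (B 2) (schCentroid A B))
    (hside1 : ∀ i : Fin 3,
      0 < det4 (A i) (B i) (A (i + 1)) x * det4 (A i) (B i) (A (i + 1)) (schCentroid A B))
    (hside2 : ∀ i : Fin 3,
      0 < det4 (B i) (A (i + 1)) (B (i + 1)) x *
            det4 (B i) (A (i + 1)) (B (i + 1)) (schCentroid A B))
    (hcone : ∀ i : Fin 3,
      0 < det4 (B i) (B (i + 1)) (A (i + 1)) x *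
            det4 (B i) (B (i + 1)) (A (i + 1)) (B (i + 2))) :
    ∀ i : Fin 3,
      convexHull ℝ ({x, B 0, B 1, B 2} : Set (Fin 3 → ℝ)) ∩
        openSegment ℝ (B i) (A (i + 1)) = ∅ :=
  stmt19_general A B x hcone
end
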